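/- Solution preservation of α: if L is a minimum l-cover of S, then α¹(L) is a minimum c-cover of S, i.e. α¹(L) is a c-cover of S consisting of chains and |α¹(L)| ≤ |C'| for every finite c-cover C' of S by chains. -/

import Mathlib

/-!
An index `ℓ` covers exactly the searches `s` whose elements form the prefix of `ℓ` of length `|s|`,
so the searches covered by one index are nested by cardinality and `α⁰(ℓ)` is a chain.
Conversely every finite chain `s₁ ⊂ ⋯ ⊂ sₖ` is covered by one index: list `s₁`, then
`s₂ \ s₁`, and so on. Hence a c-cover `C'` yields an l-cover with at most `|C'|` indexes, and
minimality of `L` gives `|α¹(L)| ≤ |L| ≤ |C'|`.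
-/

variable {A : Type*} [DecidableEq A]

/-- An index `ℓ` covers a search `s` if the first `|s|` elements of `ℓ` are
exactly the elements of `s`. -/
def Covers (ℓ : List A) (s : Finset A) : Prop :=
  (ℓ.take s.card).toFinset = s

instance (ℓ : List A) (s : Finset A) : Decidable (Covers ℓ s) := by
  unfold Covers; infer_instance

/-- `α⁰(ℓ)`: the finite set of searches in `S` covered by the index `ℓ`. -/
def Alpha0 (S : Finset (Finset A)) (ℓ : List A) : Finset (Finset A) :=
  S.filter fun s => Covers ℓ s

namespace Covers

variable {ℓ : List A} {s t : Finset A}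

theorem subset_of_card_le (hs : Covers ℓ s) (ht : Covers ℓ t) (h : s.card ≤ t.card) :
    s ⊆ t := by
  rw [← hs, ← ht, ← min_eq_left h, ← List.take_take]
  exact Multiset.toFinset_subset.mpr (Multiset.coe_subset.mpr (List.take_sublist _ _).subset)

theorem card_le_length (hs : Covers ℓ s) : s.card ≤ ℓ.length :=
  calc s.card = (ℓ.take s.card).toFinset.card := by rw [hs]
    _ ≤ (ℓ.take s.card).length := List.toFinset_card_le _
    _ ≤ ℓ.length := List.length_take_le' _ _

theorem append (hs : Covers ℓ s) (ℓ' : List A) : Covers (ℓ ++ ℓ') s := by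
  rw [Covers, List.take_append_of_le_length hs.card_le_length]
  exact hs

end Covers

theorem List.Nodup.covers_toFinset {ℓ : List A} (hℓ : ℓ.Nodup) : Covers ℓ ℓ.toFinset := by
  rw [Covers, List.toFinset_card_of_nodup hℓ, List.take_length]

theorem isChain_setOf_covers (ℓ : List A) : IsChain (· ⊂ ·) {s | Covers ℓ s} := by
  intro s hs t ht hst
  rcases le_total s.card t.card with h | h
  · exact Or.inl ((hs.subset_of_card_le ht h).ssubset_of_ne hst)
  · exact Or.inr ((ht.subset_of_card_le hs h).ssubset_of_ne hst.symm)

theorem isChain_alpha0 (S : Finset (Finset A)) (ℓ : List A) :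
    IsChain (· ⊂ ·) (Alpha0 S ℓ : Set (Finset A)) :=
  (isChain_setOf_covers ℓ).mono fun _ hs => (Finset.mem_filter.mp hs).2

theorem List.Nodup.exists_append_toFinset_eq {ℓ : List A} (hℓ : ℓ.Nodup) {m : Finset A}
    (hm : ℓ.toFinset ⊆ m) : ∃ ℓ' : List A, (ℓ ++ ℓ').Nodup ∧ (ℓ ++ ℓ').toFinset = m := by
  refine ⟨(m \ ℓ.toFinset).toList, hℓ.append (Finset.nodup_toList _) ?_, ?_⟩
  · intro x hx hx'
    exact (Finset.mem_sdiff.mp (Finset.mem_toList.mp hx')).2 (List.mem_toFinset.mpr hx)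
  · rw [List.toFinset_append, Finset.toList_toFinset, Finset.union_sdiff_of_subset hm]

theorem exists_nodup_forall_covers {c : Finset (Finset A)}
    (hc : IsChain (· ⊂ ·) (c : Set (Finset A))) :
    ∃ ℓ : List A, ℓ.Nodup ∧ ∀ s ∈ c, Covers ℓ s := by
  -- A member `m` of maximal cardinality contains the rest of the chain, so `ℓ` extends to list `m`.
  suffices ∃ ℓ : List A, ℓ.Nodup ∧ ℓ.toFinset = c.sup id ∧ ∀ s ∈ c, Covers ℓ s from
    this.imp fun _ h => ⟨h.1, h.2.2⟩
  revert hc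
  refine Finset.induction_on_max_value Finset.card c
    (fun _ => ⟨[], List.nodup_nil, rfl, by simp⟩) fun m c hmc hmax ih hc => ?_
  obtain ⟨ℓ, hℓ, hℓc, hcov⟩ := ih (hc.mono (Finset.coe_subset.mpr (Finset.subset_insert m c)))
  have hsub : ∀ s ∈ c, s ⊆ m := by
    intro s hs
    rcases hc (by simp [hs]) (by simp) (ne_of_mem_of_not_mem hs hmc) with h | h
    · exact h.subset
    · exact absurd (Finset.card_lt_card h) (hmax s hs).not_gt
  have hsup : c.sup id ⊆ m := Finset.sup_le hsub
  obtain ⟨ℓ', hnodup, hm⟩ := hℓ.exists_append_toFinset_eq (hℓc ▸ hsup)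
  refine ⟨ℓ ++ ℓ', hnodup, by simpa [hm] using hsup, ?_⟩
  rintro s hs
  rcases Finset.mem_insert.mp hs with rfl | hs
  · exact hm ▸ hnodup.covers_toFinset
  · exact (hcov s hs).append ℓ'

theorem exists_indexes_covering_chains (C : Finset (Finset (Finset A)))
    (hC : ∀ c ∈ C, IsChain (· ⊂ ·) (c : Set (Finset A))) :
    ∃ L : Finset (List A), L.card ≤ C.card ∧ (∀ ℓ ∈ L, ℓ ≠ [] ∧ ℓ.Nodup) ∧
      ∀ c ∈ C, ∀ s ∈ c, s.Nonempty → ∃ ℓ ∈ L, Covers ℓ s := by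
  choose g hg using fun c (hc : c ∈ C) => exists_nodup_forall_covers (hC c hc)
  refine ⟨(C.attach.image fun c => g c.1 c.2).erase [], ?_, ?_, ?_⟩
  · calc _ ≤ (C.attach.image fun c => g c.1 c.2).card := Finset.card_erase_le
      _ ≤ C.attach.card := Finset.card_image_le
      _ = C.card := Finset.card_attach
  · intro ℓ hℓ
    obtain ⟨hne, hℓ⟩ := Finset.mem_erase.mp hℓ
    obtain ⟨c, -, rfl⟩ := Finset.mem_image.mp hℓ
    exact ⟨hne, (hg c.1 c.2).1⟩
  · intro c hc s hs hsne
    have hcov := (hg c hc).2 s hs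
    refine ⟨g c hc, Finset.mem_erase.mpr ⟨?_, Finset.mem_image_of_mem _ (C.mem_attach ⟨c, hc⟩)⟩,
      hcov⟩
    rintro hnil
    rw [hnil] at hcov
    exact hsne.ne_empty (by simpa [Covers] using hcov.symm)

theorem alpha1_minimum_cCover_general (S : Finset (Finset A))
    (hS : ∀ s ∈ S, s.Nonempty) (L : Finset (List A))
    (hLcover : ∀ s ∈ S, ∃ ℓ ∈ L, Covers ℓ s)
    (hLmin : ∀ L' : Finset (List A), (∀ ℓ ∈ L', ℓ ≠ [] ∧ ℓ.Nodup) →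
      (∀ s ∈ S, ∃ ℓ ∈ L', Covers ℓ s) → L.card ≤ L'.card) :
    (∀ c ∈ L.image (Alpha0 S), (∀ s ∈ c, s.Nonempty) ∧
        IsChain (· ⊂ ·) (c : Set (Finset A))) ∧
    (∀ s ∈ S, ∃ c ∈ L.image (Alpha0 S), s ∈ c) ∧
    (∀ C' : Finset (Finset (Finset A)),
      (∀ c ∈ C', (∀ s ∈ c, s.Nonempty) ∧ IsChain (· ⊂ ·) (c : Set (Finset A))) →
      (∀ s ∈ S, ∃ c ∈ C', s ∈ c) →
      (L.image (Alpha0 S)).card ≤ C'.card) := by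
  refine ⟨?_, ?_, ?_⟩
  · rintro _ hc
    obtain ⟨ℓ, -, rfl⟩ := Finset.mem_image.mp hc
    exact ⟨fun s hs => hS s (Finset.mem_filter.mp hs).1, isChain_alpha0 S ℓ⟩
  · intro s hs
    obtain ⟨ℓ, hℓ, hcov⟩ := hLcover s hs
    exact ⟨Alpha0 S ℓ, Finset.mem_image_of_mem _ hℓ, Finset.mem_filter.mpr ⟨hs, hcov⟩⟩
  · intro C' hC'chains hC'cover
    obtain ⟨L', hL'card, hL'idx, hL'cov⟩ :=
      exists_indexes_covering_chains C' fun c hc => (hC'chains c hc).2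
    have hL'cover : ∀ s ∈ S, ∃ ℓ ∈ L', Covers ℓ s := fun s hs =>
      have ⟨c, hc, hsc⟩ := hC'cover s hs
      hL'cov c hc s hsc (hS s hs)
    calc (L.image (Alpha0 S)).card ≤ L.card := Finset.card_image_le
      _ ≤ L'.card := hLmin L' hL'idx hL'cover
      _ ≤ C'.card := hL'card

/-- **Solution preservation of α.**
If `L` is a minimum l-cover of `S`, then `α¹(L) = {α⁰(ℓ) | ℓ ∈ L}` is a
minimum c-cover of `S`: it consists of chains of searches, it is a c-cover of
`S`, and `|α¹(L)| ≤ |C'|` for every finite c-cover `C'` of `S` by chains. -/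
theorem alpha1_minimum_cCover (S : Finset (Finset A))
    (hS : ∀ s ∈ S, s.Nonempty) (L : Finset (List A))
    (hLidx : ∀ ℓ ∈ L, ℓ ≠ [] ∧ ℓ.Nodup)
    (hLcover : ∀ s ∈ S, ∃ ℓ ∈ L, Covers ℓ s)
    (hLmin : ∀ L' : Finset (List A), (∀ ℓ ∈ L', ℓ ≠ [] ∧ ℓ.Nodup) →
      (∀ s ∈ S, ∃ ℓ ∈ L', Covers ℓ s) → L.card ≤ L'.card) :
    (∀ c ∈ L.image (Alpha0 S), (∀ s ∈ c, s.Nonempty) ∧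
        IsChain (· ⊂ ·) (c : Set (Finset A))) ∧
    (∀ s ∈ S, ∃ c ∈ L.image (Alpha0 S), s ∈ c) ∧
    (∀ C' : Finset (Finset (Finset A)),
      (∀ c ∈ C', (∀ s ∈ c, s.Nonempty) ∧ IsChain (· ⊂ ·) (c : Set (Finset A))) →
      (∀ s ∈ S, ∃ c ∈ C', s ∈ c) →
      (L.image (Alpha0 S)).card ≤ C'.card) :=
  alpha1_minimum_cCover_general S hS L hLcover hLmin
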